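/- arXiv:1910.02151 — 2 statements merged into one kernel-verified Lean document; each statement's English description precedes it below -/
import Mathlib

section
/- Every string S ∈ 𝒮^p_n with n ≥ 1 satisfies δ(S) ≤ 2; in fact, d_k(S) ≤ 2k holds for every k ∈ {1,...,n}. -/
/-- The set of distinct length-`k` contiguous substrings of `S`. -/
def substrings {α : Type} [DecidableEq α] (S : List α) (k : ℕ) : Finset (List α) :=
  ((Finset.range (S.length + 1)).image (fun i => (S.drop i).take k)).filter
    (fun t => t.length = k)

/-- `d_k(S)`: the number of distinct length-`k` substrings of `S`. -/
def subCount {α : Type} [DecidableEq α] (S : List α) (k : ℕ) : ℕ :=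
  (substrings S k).card

/-- The measure `δ(S) = max { d_k(S)/k : 1 ≤ k ≤ |S| }` (with value 0 for the empty string). -/
def delta {α : Type} [DecidableEq α] (S : List α) : ℚ :=
  if h : S = [] then 0
  else
    (Finset.Icc 1 S.length).sup'
      (Finset.nonempty_Icc.mpr (Nat.one_le_iff_ne_zero.mpr
        (fun h0 => h (List.length_eq_zero_iff.mp h0))))
      (fun k => (subCount S k : ℚ) / k)

/-- `𝒮^p_n`: the family of length-`n` prefixes of infinite strings over `{a, b}`
(`a = false`, `b = true`) in which the first `b` occurs at position 1 and, for each
`j ≥ 2`, the `j`-th `b` occurs at some position in `[2·4^(j-2)+1 .. 4^(j-1)]`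
(all positions are 1-based; all other positions hold `a`). -/
def SPfamily (n : ℕ) : Set (List Bool) :=
  { S | S.length = n ∧ ∃ p : ℕ → ℕ, p 1 = 1 ∧
      (∀ j, 2 ≤ j → 2 * 4 ^ (j - 2) + 1 ≤ p j ∧ p j ≤ 4 ^ (j - 1)) ∧
      ∀ i, i < n → (S.getD i false = true ↔ ∃ j, 1 ≤ j ∧ p j = i + 1) }

/-!
In a string of `𝒮^p` every `b` sits at more than twice the 1-based position of the previous one,
since `p (j + 1) ≥ 2 * 4 ^ (j - 1) + 1 > 2 * p j`. So a length-`k` window starting at 0-based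
index `i` that contains two `b`s, at positions `X < Y`, has `2 * (i + 1) ≤ 2 * X < Y ≤ i + k`,
hence `i ≤ k - 3`: at most `k - 2` such windows. Every other window contains at most one `b`, so
it is one of the `k + 1` words `a^k`, `a^m b a^(k-m-1)`. Thus `d_k ≤ (k + 1) + (k - 2) ≤ 2k`.
-/

theorem List.eq_set_replicate_idxOf_of_count_le_one {l : List Bool} (h : l.count true ≤ 1) :
    l = (List.replicate l.length false).set (l.idxOf true) true := by
  induction l with
  | nil => rfl
  | cons b l ih =>
    cases b
    · rw [List.count_cons_of_ne (by decide)] at h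
      rw [List.idxOf_cons_ne _ (by decide), List.length_cons, List.replicate_succ,
        Nat.succ_eq_add_one, List.set_cons_succ, ← ih h]
    · have hl : l.count true = 0 := by simpa using h
      rw [List.idxOf_cons_self, List.length_cons, List.replicate_succ, List.set_cons_zero,
        ← List.eq_replicate_iff.2 ⟨rfl, fun b hb => ?_⟩]
      cases b
      · rfl
      · exact absurd hb (List.count_eq_zero.1 hl)

theorem List.exists_lt_getElem?_eq_of_two_le_count {α : Type*} [DecidableEq α] {l : List α}
    {a : α} (h : 2 ≤ l.count a) : ∃ x y : ℕ, x < y ∧ l[x]? = some a ∧ l[y]? = some a := by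
  obtain ⟨f, hf⟩ := List.sublist_iff_exists_fin_orderEmbedding_get_eq.1
    (List.duplicate_iff_sublist.1 (List.duplicate_iff_two_le_count.2 h))
  refine ⟨f 0, f 1, f.strictMono (show (0 : Fin 2) < 1 by decide), ?_, ?_⟩
  · simpa using (hf 0).symm
  · simpa using (hf 1).symm

/-- Any two `true`s of `S`, at 1-based positions `X < Y`, satisfy `2 * X < Y`. -/
def DoublingSparse (S : List Bool) : Prop :=
  ∀ x y : ℕ, x < y → S[x]? = some true → S[y]? = some true → 2 * (x + 1) < y + 1

theorem DoublingSparse.substrings_subset {S : List Bool} (hS : DoublingSparse S) (k : ℕ) :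
    substrings S k ⊆ (Finset.range (k + 1)).image (fun m => (List.replicate k false).set m true) ∪
      (Finset.range (k - 2)).image (fun i => (S.drop i).take k) := by
  intro t ht
  simp only [substrings, Finset.mem_filter, Finset.mem_image, Finset.mem_range] at ht
  obtain ⟨⟨i, -, rfl⟩, hlen⟩ := ht
  rw [Finset.mem_union, Finset.mem_image, Finset.mem_image]
  by_cases hcount : ((S.drop i).take k).count true ≤ 1
  · refine .inl ⟨_, ?_, (hlen ▸ List.eq_set_replicate_idxOf_of_count_le_one hcount).symm⟩
    have := List.idxOf_le_length (l := (S.drop i).take k) (a := true)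
    exact Finset.mem_range.2 (by omega)
  · obtain ⟨x, y, hxy, hx, hy⟩ := List.exists_lt_getElem?_eq_of_two_le_count (not_le.1 hcount)
    simp only [List.getElem?_take, List.getElem?_drop] at hx hy
    split_ifs at hx hy with hxk hyk
    have := hS _ _ (by omega) hx hy
    exact .inr ⟨i, Finset.mem_range.2 (by omega), rfl⟩

theorem DoublingSparse.subCount_le {S : List Bool} (hS : DoublingSparse S) {k : ℕ} (hk : 1 ≤ k) :
    subCount S k ≤ 2 * k := by
  calc subCount S k
      ≤ ((Finset.range (k + 1)).image (fun m => (List.replicate k false).set m true)).card +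
          ((Finset.range (k - 2)).image (fun i => (S.drop i).take k)).card :=
        (Finset.card_le_card (hS.substrings_subset k)).trans (Finset.card_union_le _ _)
    _ ≤ (k + 1) + (k - 2) := by
        gcongr <;> exact Finset.card_image_le.trans (Finset.card_range _).le
    _ ≤ 2 * k := by omega

theorem delta_le_of_subCount_le {α : Type} [DecidableEq α] {S : List α} {c : ℚ} (hc : 0 ≤ c)
    (h : ∀ k, 1 ≤ k → k ≤ S.length → (subCount S k : ℚ) ≤ c * k) : delta S ≤ c := by
  unfold delta
  split_ifs
  · exact hc
  · refine Finset.sup'_le _ _ fun k hk => ?_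
    obtain ⟨hk1, hkn⟩ := Finset.mem_Icc.1 hk
    rw [div_le_iff₀ (by exact_mod_cast hk1)]
    exact h k hk1 hkn

theorem two_mul_lt_succ_of_pow_four_bounds {p : ℕ → ℕ} (hp1 : p 1 = 1)
    (hp : ∀ j, 2 ≤ j → 2 * 4 ^ (j - 2) + 1 ≤ p j ∧ p j ≤ 4 ^ (j - 1)) (j : ℕ) :
    2 * p (j + 1) < p (j + 2) := by
  rcases j with _ | j
  · have := (hp 2 le_rfl).1
    simp only [zero_add, hp1, Nat.sub_self, pow_zero] at this ⊢
    omega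
  · show 2 * p (j + 2) < p (j + 3)
    have hlo := (hp (j + 3) (by omega)).1
    have hhi := (hp (j + 2) (by omega)).2
    simp only [show j + 3 - 2 = j + 1 by omega, show j + 2 - 1 = j + 1 by omega] at hlo hhi
    omega

theorem doublingSparse_of_mem_SPfamily {n : ℕ} {S : List Bool} (hS : S ∈ SPfamily n) :
    DoublingSparse S := by
  obtain ⟨hlen, p, hp1, hp, hpos⟩ := hS
  have hdouble := two_mul_lt_succ_of_pow_four_bounds hp1 hp
  -- `q j` is the 1-based position of the `(j + 1)`-th `true`
  set q : ℕ → ℕ := fun j => p (j + 1)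
  have hq : StrictMono q := strictMono_nat_of_lt_succ fun j => by
    show p (j + 1) < p (j + 2)
    have := hdouble j
    omega
  have hindex : ∀ x, S[x]? = some true → ∃ a, q a = x + 1 := by
    intro x hx
    have hxn : x < n := hlen ▸ (List.getElem?_eq_some_iff.1 hx).1
    obtain ⟨a, ha, hpa⟩ := (hpos x hxn).1 (by simp [List.getD_eq_getElem?_getD, hx])
    exact ⟨a - 1, by simp only [q, Nat.sub_add_cancel ha, hpa]⟩
  intro x y hxy hx hy
  obtain ⟨a, ha⟩ := hindex x hx
  obtain ⟨b, hb⟩ := hindex y hy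
  have hab : a < b := hq.lt_iff_lt.1 (by omega)
  have hmono : p (a + 2) ≤ p (b + 1) := hq.monotone hab
  have := hdouble a
  simp only [q] at ha hb
  omega

theorem delta_SPfamily_le_two_general (n : ℕ) (S : List Bool) (hS : S ∈ SPfamily n) :
    (∀ k ∈ Finset.Icc 1 n, subCount S k ≤ 2 * k) ∧ delta S ≤ 2 := by
  have hsparse := doublingSparse_of_mem_SPfamily hS
  refine ⟨fun k hk => hsparse.subCount_le (Finset.mem_Icc.1 hk).1, ?_⟩
  refine delta_le_of_subCount_le zero_le_two fun k hk _ => ?_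
  exact_mod_cast hsparse.subCount_le hk

/-- Every `S ∈ 𝒮^p_n` with `n ≥ 1` satisfies `d_k(S) ≤ 2k` for every `k ∈ {1,...,n}`;
consequently `δ(S) ≤ 2`. -/
theorem delta_SPfamily_le_two (n : ℕ) (hn : 1 ≤ n) (S : List Bool) (hS : S ∈ SPfamily n) :
    (∀ k ∈ Finset.Icc 1 n, subCount S k ≤ 2 * k) ∧ delta S ≤ 2 :=
  delta_SPfamily_le_two_general n S hS
end

section
/- Let S₁, ..., S_m be nonempty strings (m ≥ 1) over pairwise disjoint alphabets, and let c₁, ..., c_{m−1} be pairwise distinct symbols not occurring in any S_i. Let S = S₁ c₁ S₂ c₂ ⋯ c_{m−1} S_m. Then γ(S) ≥ Σ_{i=1}^{m} γ(S_i). -/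
/-!
Because the blocks use pairwise disjoint alphabets, an occurrence of a substring of one block
must lie inside that block, so the positions of an attractor of `S` that fall into a block form an
attractor of that block. Hence `γ(X ++ Y) ≥ γ(X) + γ(Y)` whenever `X` and `Y` share no letter,
and the theorem follows by splitting `S = S₁ ++ [c₁] ++ (S₂ c₂ ⋯ S_m)` and inducting on `m`.
-/

/-- `Γ` is an attractor of `S`: every nonempty substring `S[i..j]` (1-based) has an
occurrence `S[i'..j']` covering a position of `Γ`. -/
def IsAttractor {α : Type} (S : List α) (Γ : Finset ℕ) : Prop :=
  (∀ p ∈ Γ, 1 ≤ p ∧ p ≤ S.length) ∧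
  ∀ i j : ℕ, 1 ≤ i → i ≤ j → j ≤ S.length →
    ∃ i' j' : ℕ, 1 ≤ i' ∧ i' ≤ j' ∧ j' ≤ S.length ∧
      (S.drop (i' - 1)).take (j' - i' + 1) = (S.drop (i - 1)).take (j - i + 1) ∧
      ∃ p ∈ Γ, i' ≤ p ∧ p ≤ j'

/-- `γ(S)`: the minimum size of an attractor of `S`. -/
noncomputable def gamma {α : Type} (S : List α) : ℕ :=
  sInf { m | ∃ Γ : Finset ℕ, IsAttractor S Γ ∧ Γ.card = m }

/-- `joinSep [S₁, ..., S_m] [c₁, ..., c_{m−1}] = S₁ c₁ S₂ c₂ ⋯ c_{m−1} S_m`: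
concatenation of the strings interleaved with the separator symbols. -/
def joinSep {α : Type} : List (List α) → List α → List α
  | [], _ => []
  | [T], _ => T
  | T :: Ts, [] => T ++ joinSep Ts []
  | T :: Ts, c :: cs => T ++ c :: joinSep Ts cs

section

variable {α : Type}

def substr (S : List α) (i j : ℕ) : List α := (S.drop (i - 1)).take (j - i + 1)

lemma mem_of_mem_substr {S : List α} {i j : ℕ} {a : α} (h : a ∈ substr S i j) : a ∈ S :=
  List.mem_of_mem_drop (List.mem_of_mem_take h)

lemma getElem_mem_substr {S : List α} {i j k : ℕ} (hik : i ≤ k + 1) (hkj : k < j)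
    (hk : k < S.length) : S[k] ∈ substr S i j := by
  rw [List.mem_iff_getElem]
  refine ⟨k - (i - 1), by simp [substr]; omega, ?_⟩
  simp only [substr, List.getElem_take, List.getElem_drop]
  congr 1
  omega

lemma substr_append_append (L M N : List α) {i j : ℕ} (hi : 1 ≤ i) (hij : i ≤ j)
    (hj : j ≤ M.length) : substr (L ++ M ++ N) (i + L.length) (j + L.length) = substr M i j := by
  have hdrop : i + L.length - 1 = L.length + (i - 1) := by omega
  have htake : j + L.length - (i + L.length) + 1 = j - i + 1 := by omega
  rw [substr, hdrop, htake, List.append_assoc, List.drop_length_add_append,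
    List.drop_append_of_le_length (by omega), List.take_append_of_le_length (by simp; omega)]
  rfl

def Finset.window (Γ : Finset ℕ) (a n : ℕ) : Finset ℕ :=
  (Γ.filter fun p => a < p ∧ p ≤ a + n).image (· - a)

lemma Finset.card_window_add_card_window_le (Γ : Finset ℕ) (a n : ℕ) :
    (Γ.window 0 a).card + (Γ.window a n).card ≤ Γ.card := by
  have hleft : (Γ.window 0 a).card ≤ (Γ.filter (· ≤ a)).card :=
    Finset.card_image_le.trans <| Finset.card_le_card fun p hp => by
      simp only [Finset.mem_filter] at hp ⊢; exact ⟨hp.1, by omega⟩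
  have hright : (Γ.window a n).card ≤ (Γ.filter fun p => ¬p ≤ a).card :=
    Finset.card_image_le.trans <| Finset.card_le_card fun p hp => by
      simp only [Finset.mem_filter] at hp ⊢; exact ⟨hp.1, by omega⟩
  have := Γ.card_filter_add_card_filter_not (· ≤ a)
  omega

/-- An occurrence of a substring of `M` cannot leave `M`: its first letter is not in `L` and its
last letter is not in `N`. -/
theorem IsAttractor.window {L M N : List α} {Γ : Finset ℕ} (hΓ : IsAttractor (L ++ M ++ N) Γ)
    (hL : ∀ a ∈ M, a ∉ L) (hN : ∀ a ∈ M, a ∉ N) :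
    IsAttractor M (Γ.window L.length M.length) := by
  refine ⟨fun p hp => ?_, fun i j hi hij hj => ?_⟩
  · obtain ⟨q, hq, rfl⟩ := Finset.mem_image.mp hp
    have := (Finset.mem_filter.mp hq).2
    omega
  obtain ⟨i', j', hi', hij', hj', hocc, p, hp, hpi, hpj⟩ :=
    hΓ.2 (i + L.length) (j + L.length) (by omega) (by omega) (by simp; omega)
  change substr _ i' j' = substr _ _ _ at hocc
  rw [substr_append_append L M N hi hij hj] at hocc
  have hmem (k : ℕ) (hik : i' ≤ k + 1) (hkj : k < j') :
      (L ++ M ++ N)[k]'(by omega) ∈ M :=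
    mem_of_mem_substr (hocc ▸ getElem_mem_substr hik hkj _)
  have hstart : L.length < i' := by
    by_contra! h
    have := hmem (i' - 1) (by omega) (by omega)
    rw [List.getElem_append_left (by simp; omega), List.getElem_append_left (by omega)] at this
    exact hL _ this (List.getElem_mem _)
  have hend : j' ≤ L.length + M.length := by
    by_contra! h
    have := hmem (j' - 1) (by omega) (by omega)
    rw [List.getElem_append_right (by simp; omega)] at this
    exact hN _ this (List.getElem_mem _)
  refine ⟨i' - L.length, j' - L.length, by omega, by omega, by omega, ?_,
    p - L.length, ?_, by omega, by omega⟩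
  · show substr M _ _ = substr M i j
    rw [← hocc, ← substr_append_append L M N (by omega) (by omega) (by omega)]
    congr 1 <;> omega
  · exact Finset.mem_image.mpr ⟨p, Finset.mem_filter.mpr ⟨hp, by omega, by omega⟩, rfl⟩

lemma isAttractor_Icc (S : List α) : IsAttractor S (Finset.Icc 1 S.length) :=
  ⟨fun _ hp => Finset.mem_Icc.mp hp,
    fun i j hi hij hj => ⟨i, j, hi, hij, hj, rfl, i, Finset.mem_Icc.mpr ⟨hi, hij.trans hj⟩,
      le_rfl, hij⟩⟩

lemma gamma_le_card {S : List α} {Γ : Finset ℕ} (h : IsAttractor S Γ) : gamma S ≤ Γ.card :=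
  Nat.sInf_le ⟨Γ, h, rfl⟩

lemma exists_isAttractor_card_eq_gamma (S : List α) :
    ∃ Γ : Finset ℕ, IsAttractor S Γ ∧ Γ.card = gamma S :=
  Nat.sInf_mem (s := {m | ∃ Γ : Finset ℕ, IsAttractor S Γ ∧ Γ.card = m})
    ⟨_, _, isAttractor_Icc S, rfl⟩

theorem gamma_add_gamma_le_gamma_append {X Y : List α} (h : ∀ a ∈ X, a ∉ Y) :
    gamma X + gamma Y ≤ gamma (X ++ Y) := by
  obtain ⟨Γ, hΓ, hcard⟩ := exists_isAttractor_card_eq_gamma (X ++ Y)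
  have hX : IsAttractor X (Γ.window 0 X.length) :=
    IsAttractor.window (L := []) (by simpa using hΓ) (fun _ _ => List.not_mem_nil) h
  have hY : IsAttractor Y (Γ.window X.length Y.length) :=
    IsAttractor.window (N := []) (by simpa using hΓ) (fun a ha haX => h a haX ha)
      (fun _ _ => List.not_mem_nil)
  calc gamma X + gamma Y ≤ (Γ.window 0 X.length).card + (Γ.window X.length Y.length).card :=
        add_le_add (gamma_le_card hX) (gamma_le_card hY)
    _ ≤ gamma (X ++ Y) := hcard ▸ Γ.card_window_add_card_window_le _ _

lemma joinSep_subset (Ss : List (List α)) (seps : List α) :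
    joinSep Ss seps ⊆ Ss.flatten ++ seps := by
  induction Ss, seps using joinSep.induct <;> simp_all [joinSep, List.subset_def] <;> grind

lemma notMem_joinSep {Ss : List (List α)} {seps : List α} {a : α} (hSs : ∀ T ∈ Ss, a ∉ T)
    (hseps : a ∉ seps) : a ∉ joinSep Ss seps := fun h => by
  rcases List.mem_append.mp (joinSep_subset Ss seps h) with hflat | h
  · obtain ⟨T, hT, haT⟩ := List.mem_flatten.mp hflat
    exact hSs T hT haT
  · exact hseps h

end

theorem gamma_joinSep_ge_general {α : Type}
    (Ss : List (List α)) (seps : List α)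
    (hlen : seps.length + 1 = Ss.length)
    (hdisj : Ss.Pairwise (fun T U => ∀ a ∈ T, a ∉ U))
    (hnd : seps.Nodup) (hsep : ∀ c ∈ seps, ∀ T ∈ Ss, c ∉ T) :
    (Ss.map gamma).sum ≤ gamma (joinSep Ss seps) := by
  induction Ss generalizing seps with
  | nil => simp
  | cons T Ts ih =>
    match Ts, seps, hlen with
    | [], _, _ => simp [joinSep]
    | U :: Us, c :: cs, hlen =>
      set R := joinSep (U :: Us) cs
      obtain ⟨hTdisj, hUsdisj⟩ := List.pairwise_cons.mp hdisj
      obtain ⟨hc, hcs⟩ := List.nodup_cons.mp hnd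
      have hR : ((U :: Us).map gamma).sum ≤ gamma R :=
        ih cs (by simpa using hlen) hUsdisj hcs
          (fun c' hc' V hV => hsep c' (by simp [hc']) V (by simp [hV]))
      have hTR : ∀ a ∈ T, a ∉ [c] ++ R := fun a ha => by
        simp only [List.singleton_append, List.mem_cons, not_or]
        exact ⟨fun hac => hsep c (by simp) T (by simp) (hac ▸ ha),
          notMem_joinSep (fun V hV => hTdisj V hV a ha)
            (fun hacs => hsep a (by simp [hacs]) T (by simp) ha)⟩
      have hcR : ∀ a ∈ [c], a ∉ R := by
        simpa using notMem_joinSep (fun V hV => hsep c (by simp) V (by simp [hV])) hc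
      calc ((T :: U :: Us).map gamma).sum
          ≤ gamma T + (gamma [c] + gamma R) := by
            simp only [List.map_cons, List.sum_cons] at hR ⊢; omega
        _ ≤ gamma (T ++ ([c] ++ R)) :=
          (Nat.add_le_add_left (gamma_add_gamma_le_gamma_append hcR) _).trans
            (gamma_add_gamma_le_gamma_append hTR)

/-- If `S = S₁ c₁ S₂ c₂ ⋯ c_{m−1} S_m` where the `Sᵢ` are nonempty strings over
pairwise disjoint alphabets and the separators `c₁, ..., c_{m−1}` are pairwise
distinct symbols occurring in no `Sᵢ`, then `γ(S) ≥ Σᵢ γ(Sᵢ)`. -/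
theorem gamma_joinSep_ge {α : Type} [DecidableEq α]
    (Ss : List (List α)) (seps : List α)
    (hm : 1 ≤ Ss.length) (hlen : seps.length + 1 = Ss.length)
    (hne : ∀ T ∈ Ss, T ≠ [])
    (hdisj : Ss.Pairwise (fun T U => ∀ a ∈ T, a ∉ U))
    (hnd : seps.Nodup) (hsep : ∀ c ∈ seps, ∀ T ∈ Ss, c ∉ T) :
    (Ss.map gamma).sum ≤ gamma (joinSep Ss seps) :=
  gamma_joinSep_ge_general Ss seps hlen hdisj hnd hsep
end
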